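/- For density operators ρ and σ on a finite-dimensional Hilbert space, the trace distance satisfies d(ρ,σ) ≤ √(1 − F(ρ,σ)²), where F is the Uhlmann fidelity. -/

import Mathlib

set_option linter.unusedSectionVars false
set_option maxHeartbeats 1000000

open Matrix
open scoped ComplexOrder

variable {ι : Type*} [Fintype ι] [DecidableEq ι]

/-- Square root of a matrix: the positive semidefinite square root when the
matrix is positive semidefinite, and `0` otherwise. -/
noncomputable def msqrt (A : Matrix ι ι ℂ) : Matrix ι ι ℂ :=
  letI := Classical.propDecidable A.PosSemidef
  if h : A.PosSemidef then
    (h.1.eigenvectorUnitary : Matrix ι ι ℂ) *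
      diagonal (fun i => ((Real.sqrt (h.1.eigenvalues i) : ℝ) : ℂ)) *
      (star h.1.eigenvectorUnitary : Matrix ι ι ℂ)
  else 0

/-- A density operator: positive semidefinite with unit trace. -/
def IsDensity (ρ : Matrix ι ι ℂ) : Prop := ρ.PosSemidef ∧ ρ.trace = 1

/-- Uhlmann fidelity `F(ρ,σ) = Tr √(√ρ σ √ρ)`. -/
noncomputable def fidelity (ρ σ : Matrix ι ι ℂ) : ℝ :=
  (msqrt (msqrt ρ * σ * msqrt ρ)).trace.re

/-- Trace distance `d(ρ,σ) = (1/2) Tr |ρ - σ|`, where `|A| = √(Aᴴ A)`. -/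
noncomputable def traceDist (ρ σ : Matrix ι ι ℂ) : ℝ :=
  (1 / 2) * (msqrt ((ρ - σ)ᴴ * (ρ - σ))).trace.re

/-- Bures distance `D(ρ,σ) = 2√(1 - F(ρ,σ))`. -/
noncomputable def buresDist (ρ σ : Matrix ι ι ℂ) : ℝ :=
  2 * Real.sqrt (1 - fidelity ρ σ)

namespace FvG

open scoped MatrixOrder

/-! ### Basic trace positivity lemmas -/

lemma diag_nonneg' {A : Matrix ι ι ℂ} (hA : A.PosSemidef) (i : ι) : 0 ≤ A i i := by
  have := hA.dotProduct_mulVec_nonneg (Pi.single i 1)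
  simpa [dotProduct, Pi.single_apply, mulVec] using this

lemma trace_nonneg' {A : Matrix ι ι ℂ} (hA : A.PosSemidef) : 0 ≤ A.trace := by
  rw [Matrix.trace]
  exact Finset.sum_nonneg fun i _ => diag_nonneg' hA i

lemma trace_re_nonneg' {A : Matrix ι ι ℂ} (hA : A.PosSemidef) : 0 ≤ A.trace.re := by
  have := trace_nonneg' hA
  rw [Complex.le_def] at this
  simpa using this.1

lemma trace_mul_nonneg' {A B : Matrix ι ι ℂ} (hA : A.PosSemidef) (hB : B.PosSemidef) :
    0 ≤ (A * B).trace := by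
  have h1 : A * B = CFC.sqrt A * (CFC.sqrt A * B) := by
    rw [← mul_assoc, CFC.sqrt_mul_sqrt_self A hA.nonneg]
  have h2 : (A * B).trace = (CFC.sqrt A * B * CFC.sqrt A).trace := by
    rw [h1, ← Matrix.trace_mul_comm, mul_assoc]
  rw [h2]
  refine trace_nonneg' ?_
  have := hB.conjTranspose_mul_mul_same (CFC.sqrt A)
  simpa [(Matrix.nonneg_iff_posSemidef.mp (CFC.sqrt_nonneg A)).isHermitian.eq] using this

/-! ### Cauchy–Schwarz for the trace -/

lemma trace_conjTranspose_mul_re (X : Matrix ι ι ℂ) :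
    (Xᴴ * X).trace.re = ∑ i, ∑ j, ‖X j i‖ ^ 2 := by
  rw [Matrix.trace, Complex.re_sum]
  congr 1; ext i
  simp only [Matrix.diag_apply, Matrix.mul_apply, Matrix.conjTranspose_apply]
  rw [Complex.re_sum]
  congr 1; ext j
  rw [Complex.star_def, Complex.sq_norm, ← Complex.normSq_eq_conj_mul_self,
    Complex.ofReal_re]

lemma trace_CS (X Y : Matrix ι ι ℂ) :
    ‖(Xᴴ * Y).trace‖ ≤ Real.sqrt (Xᴴ * X).trace.re * Real.sqrt (Yᴴ * Y).trace.re := by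
  have h1 : (Xᴴ * Y).trace = ∑ i, ∑ j, star (X j i) * Y j i := by
    rw [Matrix.trace]
    simp [Matrix.mul_apply]
  calc ‖(Xᴴ * Y).trace‖ ≤ ∑ i, ∑ j, ‖X j i‖ * ‖Y j i‖ := by
        rw [h1]
        refine (norm_sum_le _ _).trans (Finset.sum_le_sum fun i _ => ?_)
        refine (norm_sum_le _ _).trans (Finset.sum_le_sum fun j _ => ?_)
        rw [norm_mul, norm_star]
    _ ≤ Real.sqrt (∑ i, ∑ j, ‖X j i‖ ^ 2) * Real.sqrt (∑ i, ∑ j, ‖Y j i‖ ^ 2) := by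
        rw [← Finset.sum_product', ← Finset.sum_product', ← Finset.sum_product']
        exact Real.sum_mul_le_sqrt_mul_sqrt _ _ _
    _ = _ := by rw [trace_conjTranspose_mul_re, trace_conjTranspose_mul_re]

/-! ### Contractions -/

lemma dot_self_re (v : ι → ℂ) : (dotProduct (star v) v).re = ∑ i, ‖v i‖ ^ 2 := by
  rw [dotProduct, Complex.re_sum]
  congr 1; ext i
  simp only [Pi.star_apply]
  rw [Complex.star_def, Complex.sq_norm, ← Complex.normSq_eq_conj_mul_self,
    Complex.ofReal_re]

lemma dot_self_re_nonneg (v : ι → ℂ) : 0 ≤ (dotProduct (star v) v).re := by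
  rw [dot_self_re]; positivity

lemma dot_CS (u v : ι → ℂ) :
    ‖dotProduct (star u) v‖ ≤
      Real.sqrt (dotProduct (star u) u).re * Real.sqrt (dotProduct (star v) v).re := by
  calc ‖dotProduct (star u) v‖ ≤ ∑ i, ‖u i‖ * ‖v i‖ := by
        refine (norm_sum_le _ _).trans (Finset.sum_le_sum fun i _ => ?_)
        simp [norm_mul]
    _ ≤ Real.sqrt (∑ i, ‖u i‖ ^ 2) * Real.sqrt (∑ i, ‖v i‖ ^ 2) :=
        Real.sum_mul_le_sqrt_mul_sqrt _ _ _
    _ = _ := by rw [dot_self_re, dot_self_re]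

lemma quadform_real {N : Matrix ι ι ℂ} (hN : N.IsHermitian) (x : ι → ℂ) :
    (starRingEnd ℂ) (dotProduct (star x) (N *ᵥ x)) = dotProduct (star x) (N *ᵥ x) := by
  have : star (dotProduct (star x) (N *ᵥ x)) = dotProduct (star x) (N *ᵥ x) := by
    calc star (dotProduct (star x) (N *ᵥ x))
        = dotProduct (star (N *ᵥ x)) (star (star x)) :=
          (Matrix.star_dotProduct_star (N *ᵥ x) (star x)).symm
      _ = dotProduct (star x ᵥ* Nᴴ) x := by rw [star_star, Matrix.star_mulVec]
      _ = dotProduct (star x) (Nᴴ *ᵥ x) := by rw [dotProduct_mulVec]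
      _ = dotProduct (star x) (N *ᵥ x) := by rw [hN.eq]
  exact this

lemma posSemidef_of_re {N : Matrix ι ι ℂ} (hN : N.IsHermitian)
    (h : ∀ x, 0 ≤ (dotProduct (star x) (N *ᵥ x)).re) : N.PosSemidef := by
  refine PosSemidef.of_dotProduct_mulVec_nonneg hN fun x => ?_
  rw [Complex.le_def]
  refine ⟨by simpa using h x, ?_⟩
  have := quadform_real hN x
  rw [Complex.conj_eq_iff_im] at this
  simpa using this.symm

lemma adjoint_move (M : Matrix ι ι ℂ) (x : ι → ℂ) :
    dotProduct (star x) ((Mᴴ * M) *ᵥ x) =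
      dotProduct (star (M *ᵥ x)) (M *ᵥ x) := by
  rw [← Matrix.mulVec_mulVec, Matrix.star_mulVec, ← dotProduct_mulVec]

/-- If `1 - M Mᴴ` is PSD then `1 - Mᴴ M` is PSD. -/
lemma contraction_flip {M : Matrix ι ι ℂ} (h : (1 - M * Mᴴ).PosSemidef) :
    (1 - Mᴴ * M).PosSemidef := by
  have herm : (1 - Mᴴ * M).IsHermitian :=
    Matrix.isHermitian_one.sub (Matrix.posSemidef_conjTranspose_mul_self M).isHermitian
  have hMt : ∀ y : ι → ℂ, (dotProduct (star (Mᴴ *ᵥ y)) (Mᴴ *ᵥ y)).re ≤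
      (dotProduct (star y) y).re := by
    intro y
    have h2 := (h.dotProduct_mulVec_nonneg y)
    rw [Matrix.sub_mulVec, dotProduct_sub, Complex.le_def] at h2
    have h3 := h2.1
    simp only [Complex.zero_re, Complex.sub_re, sub_nonneg, Matrix.one_mulVec] at h3
    have := adjoint_move Mᴴ y
    rw [Matrix.conjTranspose_conjTranspose] at this
    rw [← this]
    exact h3
  refine posSemidef_of_re herm fun x => ?_
  rw [Matrix.sub_mulVec, dotProduct_sub, Complex.sub_re, Matrix.one_mulVec, sub_nonneg]
  rw [adjoint_move M x]
  set t := Real.sqrt (dotProduct (star (M *ᵥ x)) (M *ᵥ x)).re with ht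
  set s := Real.sqrt (dotProduct (star x) x).re with hs
  have ht0 : 0 ≤ t := Real.sqrt_nonneg _
  have hs0 : 0 ≤ s := Real.sqrt_nonneg _
  have htsq : t ^ 2 = (dotProduct (star (M *ᵥ x)) (M *ᵥ x)).re :=
    Real.sq_sqrt (dot_self_re_nonneg _)
  have hssq : s ^ 2 = (dotProduct (star x) x).re := Real.sq_sqrt (dot_self_re_nonneg _)
  have key : t ^ 2 ≤ s * t := by
    have e1 : dotProduct (star (M *ᵥ x)) (M *ᵥ x) =
        dotProduct (star x) (Mᴴ *ᵥ (M *ᵥ x)) := by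
      rw [← adjoint_move M x, Matrix.mulVec_mulVec]
    have e2 : t ^ 2 ≤ ‖dotProduct (star x) (Mᴴ *ᵥ (M *ᵥ x))‖ := by
      rw [htsq, e1]
      exact Complex.re_le_norm _
    have e3 := dot_CS x (Mᴴ *ᵥ (M *ᵥ x))
    have e4 : Real.sqrt (dotProduct (star (Mᴴ *ᵥ (M *ᵥ x))) (Mᴴ *ᵥ (M *ᵥ x))).re ≤ t := by
      rw [ht]
      exact Real.sqrt_le_sqrt (hMt (M *ᵥ x))
    calc t ^ 2 ≤ _ := e2
      _ ≤ _ := e3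
      _ ≤ s * t := by
          rw [← hs]
          exact mul_le_mul_of_nonneg_left e4 hs0
  nlinarith [key, ht0, hs0, htsq, hssq]

/-! ### Functional calculus for Hermitian matrices -/

variable {B : Matrix ι ι ℂ}

noncomputable def fcU (hB : B.IsHermitian) : Matrix ι ι ℂ := hB.eigenvectorUnitary

noncomputable def fcD (hB : B.IsHermitian) (f : ℝ → ℝ) : Matrix ι ι ℂ :=
  diagonal (Complex.ofReal ∘ f ∘ hB.eigenvalues)

/-- Functional calculus of a Hermitian matrix. -/
noncomputable def fc (hB : B.IsHermitian) (f : ℝ → ℝ) : Matrix ι ι ℂ :=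
  fcU hB * fcD hB f * (fcU hB)ᴴ

lemma fcU_mul_star (hB : B.IsHermitian) : fcU hB * (fcU hB)ᴴ = 1 := by
  rw [← star_eq_conjTranspose]
  exact Matrix.mem_unitaryGroup_iff.mp hB.eigenvectorUnitary.2

lemma fcU_star_mul (hB : B.IsHermitian) : (fcU hB)ᴴ * fcU hB = 1 := by
  rw [← star_eq_conjTranspose]
  exact Matrix.mem_unitaryGroup_iff'.mp hB.eigenvectorUnitary.2

lemma fcD_herm (hB : B.IsHermitian) (f : ℝ → ℝ) : (fcD hB f)ᴴ = fcD hB f := by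
  unfold fcD
  rw [diagonal_conjTranspose]
  have : star (Complex.ofReal ∘ f ∘ hB.eigenvalues) = Complex.ofReal ∘ f ∘ hB.eigenvalues := by
    funext i
    simp [Complex.conj_ofReal]
  rw [this]

lemma fc_id (hB : B.IsHermitian) : fc hB id = B := by
  unfold fc fcU fcD
  rw [← star_eq_conjTranspose]
  exact (hB.spectral_theorem).symm

lemma fc_mul (hB : B.IsHermitian) (f g : ℝ → ℝ) : fc hB f * fc hB g = fc hB (f * g) := by
  unfold fc
  simp only [mul_assoc]
  rw [← mul_assoc ((fcU hB)ᴴ) (fcU hB), fcU_star_mul, one_mul, ← mul_assoc (fcD hB f) (fcD hB g)]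
  congr 2
  unfold fcD
  rw [diagonal_mul_diagonal]
  have : (fun i => (Complex.ofReal ∘ f ∘ hB.eigenvalues) i * (Complex.ofReal ∘ g ∘ hB.eigenvalues) i) =
      Complex.ofReal ∘ (f * g) ∘ hB.eigenvalues := by
    funext i
    simp [Complex.ofReal_mul]
  rw [this]

lemma fc_one (hB : B.IsHermitian) : fc hB (fun _ => 1) = 1 := by
  unfold fc
  have : fcD hB (fun _ => 1) = (1 : Matrix ι ι ℂ) := by
    unfold fcD
    have : Complex.ofReal ∘ (fun _ : ℝ => (1:ℝ)) ∘ hB.eigenvalues = fun _ => (1:ℂ) := by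
      funext i
      simp
    rw [this, diagonal_one]
  rw [this, mul_one, fcU_mul_star]

lemma fc_sub (hB : B.IsHermitian) (f g : ℝ → ℝ) : fc hB f - fc hB g = fc hB (f - g) := by
  unfold fc
  rw [← sub_mul, ← mul_sub]
  congr 2
  unfold fcD
  rw [diagonal_sub]
  have : (fun i => (Complex.ofReal ∘ f ∘ hB.eigenvalues) i - (Complex.ofReal ∘ g ∘ hB.eigenvalues) i) =
      Complex.ofReal ∘ (f - g) ∘ hB.eigenvalues := by
    funext i
    simp [Complex.ofReal_sub]
  rw [this]

lemma fc_hermitian (hB : B.IsHermitian) (f : ℝ → ℝ) : (fc hB f).IsHermitian := by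
  show _ = _
  unfold fc
  rw [conjTranspose_mul, conjTranspose_mul, conjTranspose_conjTranspose, fcD_herm, mul_assoc]

lemma fc_posSemidef (hB : B.IsHermitian) {f : ℝ → ℝ} (hf : ∀ t, 0 ≤ f t) :
    (fc hB f).PosSemidef := by
  unfold fc
  have hd : (fcD hB f).PosSemidef := by
    refine Matrix.PosSemidef.diagonal fun i => ?_
    simp only [Function.comp_apply]
    rw [Complex.le_def]
    constructor
    · simpa using hf _
    · simp
  exact hd.mul_mul_conjTranspose_same (fcU hB)

lemma fc_trace (hB : B.IsHermitian) (f : ℝ → ℝ) :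
    (fc hB f).trace = ∑ i, (f (hB.eigenvalues i) : ℂ) := by
  unfold fc
  rw [Matrix.trace_mul_comm, ← mul_assoc, fcU_star_mul, one_mul]
  unfold fcD
  rw [Matrix.trace_diagonal]
  rfl

lemma fc_trace_re (hB : B.IsHermitian) (f : ℝ → ℝ) :
    (fc hB f).trace.re = ∑ i, f (hB.eigenvalues i) := by
  rw [fc_trace, Complex.re_sum]
  simp

lemma fc_congr (hB : B.IsHermitian) {f g : ℝ → ℝ}
    (h : ∀ i, f (hB.eigenvalues i) = g (hB.eigenvalues i)) : fc hB f = fc hB g := by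
  unfold fc fcD
  have : Complex.ofReal ∘ f ∘ hB.eigenvalues = Complex.ofReal ∘ g ∘ hB.eigenvalues := by
    funext i
    simp [h i]
  rw [this]

/-! ### msqrt characterization -/

lemma msqrt_eq_cfcSqrt {N : Matrix ι ι ℂ} (hN : N.PosSemidef) : msqrt N = CFC.sqrt N := by
  rw [CFC.sqrt_eq_cfc, cfc_nnreal_eq_real _ N hN.nonneg, hN.1.cfc_eq]
  unfold msqrt
  rw [dif_pos hN]
  simp only [IsHermitian.cfc, Unitary.conjStarAlgAut_apply, Real.coe_sqrt, Real.coe_toNNReal']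
  congr 2
  ext i j
  simp [diagonal_apply, max_eq_left (hN.eigenvalues_nonneg _)]

lemma msqrt_eq {N B' : Matrix ι ι ℂ} (hN : N.PosSemidef) (hB' : B'.PosSemidef)
    (h : B' ^ 2 = N) : msqrt N = B' := by
  rw [msqrt_eq_cfcSqrt hN]
  exact (CFC.sqrt_eq_iff N B' hN.nonneg hB'.nonneg).mpr (by rw [← h, sq])

lemma msqrt_posSemidef {N : Matrix ι ι ℂ} (hN : N.PosSemidef) : (msqrt N).PosSemidef := by
  rw [msqrt_eq_cfcSqrt hN]
  exact Matrix.nonneg_iff_posSemidef.mp (CFC.sqrt_nonneg N)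

lemma msqrt_mul_self {N : Matrix ι ι ℂ} (hN : N.PosSemidef) : msqrt N * msqrt N = N := by
  rw [msqrt_eq_cfcSqrt hN]
  exact CFC.sqrt_mul_sqrt_self N hN.nonneg

/-! ### Final arithmetic -/

lemma final_arith {a b F : ℝ} (ha0 : 0 ≤ a) (ha1 : a ≤ 1) (hb0 : 0 ≤ b) (hb1 : b ≤ 1)
    (hd : 0 ≤ a - b) (hF0 : 0 ≤ F)
    (hF : F ≤ Real.sqrt a * Real.sqrt b + Real.sqrt (1 - a) * Real.sqrt (1 - b)) :
    a - b ≤ Real.sqrt (1 - F ^ 2) := by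
  have hsa := Real.sq_sqrt ha0
  have hsb := Real.sq_sqrt hb0
  have hsa' := Real.sq_sqrt (by linarith : (0:ℝ) ≤ 1 - a)
  have hsb' := Real.sq_sqrt (by linarith : (0:ℝ) ≤ 1 - b)
  have n1 := Real.sqrt_nonneg a
  have n2 := Real.sqrt_nonneg b
  have n3 := Real.sqrt_nonneg (1 - a)
  have n4 := Real.sqrt_nonneg (1 - b)
  have key : (a - b) ^ 2 + F ^ 2 ≤ 1 := by
    nlinarith [sq_nonneg (Real.sqrt a * Real.sqrt (1-a) - Real.sqrt b * Real.sqrt (1-b)),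
      mul_nonneg (mul_nonneg n1 n2) (mul_nonneg n3 n4)]
  have h2 : 0 ≤ 1 - F ^ 2 := by nlinarith [sq_nonneg (a - b)]
  rw [Real.le_sqrt hd h2]
  nlinarith

/-! ### The measurement step -/

lemma step {ρ σ W Q : Matrix ι ι ℂ} (hρp : ρ.PosSemidef) (hσp : σ.PosSemidef)
    (hQpsd : Q.PosSemidef) (hQproj : Q * Q = Q)
    (hW : (1 - Wᴴ * W).PosSemidef) :
    (W * (msqrt σ * (Q * msqrt ρ))).trace.re ≤
      Real.sqrt ((Q * ρ).trace.re) * Real.sqrt ((Q * σ).trace.re) := by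
  set r := msqrt ρ with hr
  set m := msqrt σ with hm
  have hrp : r.PosSemidef := msqrt_posSemidef hρp
  have hmp : m.PosSemidef := msqrt_posSemidef hσp
  have hrh : rᴴ = r := hrp.isHermitian.eq
  have hmh : mᴴ = m := hmp.isHermitian.eq
  have hQh : Qᴴ = Q := hQpsd.isHermitian.eq
  set X := r * Q with hX
  set Y := W * (m * Q) with hY
  have hXH : Xᴴ = Q * r := by rw [hX, conjTranspose_mul, hrh, hQh]
  have hrr : r * r = ρ := by rw [hr]; exact msqrt_mul_self hρp
  have hmm2 : m * m = σ := by rw [hm]; exact msqrt_mul_self hσp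
  have e0 : (W * (m * Q)) * (Q * r) = W * (m * (Q * r)) := by
    simp only [mul_assoc]
    rw [← mul_assoc Q Q r, hQproj]
  have e1 : (W * (m * (Q * r))).trace = (Xᴴ * Y).trace := by
    rw [hXH, hY, Matrix.trace_mul_comm (Q * r) (W * (m * Q)), e0]
  have e2 : (Xᴴ * X).trace = (Q * ρ).trace := by
    rw [hXH, hX]
    have h' : Q * r * (r * Q) = Q * ρ * Q := by
      simp only [mul_assoc]
      rw [← mul_assoc r r Q, hrr]
    rw [h', Matrix.trace_mul_cycle, hQproj]
  have hYH : Yᴴ = (Q * m) * Wᴴ := by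
    rw [hY, conjTranspose_mul, conjTranspose_mul, hmh, hQh]
  have e3 : (Yᴴ * Y).trace = ((Wᴴ * W) * (m * (Q * m))).trace := by
    rw [hYH, hY]
    have h1 : (Q * m) * Wᴴ * (W * (m * Q)) = (Q * m) * (Wᴴ * (W * (m * Q))) := by
      simp only [mul_assoc]
    have h2 : (Wᴴ * (W * (m * Q))) * (Q * m) = (Wᴴ * W) * (m * (Q * m)) := by
      simp only [mul_assoc]
      rw [← mul_assoc Q Q m, hQproj]
    rw [h1, Matrix.trace_mul_comm, h2]
  have hC : (m * (Q * m)).PosSemidef := by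
    have := hQpsd.mul_mul_conjTranspose_same m
    rwa [hmh, mul_assoc] at this
  have e5 : (m * (Q * m)).trace = (Q * σ).trace := by
    rw [← mul_assoc, Matrix.trace_mul_cycle, hmm2, Matrix.trace_mul_comm]
  have e6 : (Yᴴ * Y).trace.re ≤ (Q * σ).trace.re := by
    have pos := trace_mul_nonneg' hW hC
    have expand : ((1 - Wᴴ * W) * (m * (Q * m))).trace =
        (m * (Q * m)).trace - ((Wᴴ * W) * (m * (Q * m))).trace := by
      rw [sub_mul, one_mul, Matrix.trace_sub]
    rw [expand, e5, ← e3, Complex.le_def] at pos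
    have := pos.1
    simp only [Complex.zero_re, Complex.sub_re, sub_nonneg] at this
    exact this
  have hXpos : 0 ≤ (Q * ρ).trace.re := by
    have := trace_mul_nonneg' hQpsd hρp
    rw [Complex.le_def] at this
    simpa using this.1
  calc (W * (m * (Q * r))).trace.re = (Xᴴ * Y).trace.re := by rw [e1]
    _ ≤ ‖(Xᴴ * Y).trace‖ := by exact Complex.re_le_norm _
    _ ≤ Real.sqrt (Xᴴ * X).trace.re * Real.sqrt (Yᴴ * Y).trace.re := trace_CS X Y
    _ ≤ Real.sqrt ((Q * ρ).trace.re) * Real.sqrt ((Q * σ).trace.re) := by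
        rw [e2]
        exact mul_le_mul_of_nonneg_left (Real.sqrt_le_sqrt e6) (Real.sqrt_nonneg _)

end FvG

/-- Upper Fuchs–van de Graaf inequality: for density operators,
`d(ρ,σ) ≤ √(1 - F(ρ,σ)²)`. -/
theorem traceDist_le_sqrt_one_sub_fidelity_sq {ι : Type*} [Fintype ι] [DecidableEq ι]
    (ρ σ : Matrix ι ι ℂ) (hρ : IsDensity ρ) (hσ : IsDensity σ) :
    traceDist ρ σ ≤ Real.sqrt (1 - fidelity ρ σ ^ 2) := by
  obtain ⟨hρp, hρt⟩ := hρ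
  obtain ⟨hσp, hσt⟩ := hσ
  have hΔ : (ρ - σ).IsHermitian := hρp.isHermitian.sub hσp.isHermitian
  classical
  set lam := hΔ.eigenvalues with hlam
  -- eigenvalues of the difference sum to zero
  have htr0 : (ρ - σ).trace = 0 := by rw [Matrix.trace_sub, hρt, hσt, sub_self]
  have h1 : (∑ i, (lam i : ℂ)) = 0 := by
    have h1' : (FvG.fc hΔ id).trace = 0 := by rw [FvG.fc_id]; exact htr0
    rw [FvG.fc_trace] at h1'
    exact h1'
  have sum_lam : ∑ i, lam i = 0 := by
    have := congrArg Complex.re h1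
    rw [Complex.re_sum] at this
    simpa using this
  -- trace distance via eigenvalues
  have hsq : (ρ - σ)ᴴ * (ρ - σ) = FvG.fc hΔ (fun t => t * t) := by
    have h2 : FvG.fc hΔ id * FvG.fc hΔ id = FvG.fc hΔ (id * id) := FvG.fc_mul hΔ id id
    rw [FvG.fc_id] at h2
    rw [hΔ.eq, h2]
    exact FvG.fc_congr hΔ (fun i => rfl)
  have habs : msqrt ((ρ - σ)ᴴ * (ρ - σ)) = FvG.fc hΔ (fun t => |t|) := by
    refine FvG.msqrt_eq (Matrix.posSemidef_conjTranspose_mul_self _)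
      (FvG.fc_posSemidef hΔ (fun t => abs_nonneg t)) ?_
    rw [pow_two, FvG.fc_mul, hsq]
    exact FvG.fc_congr hΔ (fun i => abs_mul_abs_self _)
  have dval : traceDist ρ σ = (1 / 2) * ∑ i, |lam i| := by
    unfold traceDist
    rw [habs, FvG.fc_trace_re]
  -- the projection onto the positive part
  set pos : ℝ → ℝ := fun t => if 0 < t then 1 else 0 with hposdef
  set P : Matrix ι ι ℂ := FvG.fc hΔ pos with hPdef
  have hPpsd : P.PosSemidef :=
    FvG.fc_posSemidef hΔ (fun t => by by_cases h : 0 < t <;> simp [hposdef, h])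
  have hPproj : P * P = P := by
    rw [hPdef, FvG.fc_mul]
    exact FvG.fc_congr hΔ (fun i => by
      by_cases h : 0 < lam i <;> simp [hposdef, h, Pi.mul_apply])
  have h1P : (1 : Matrix ι ι ℂ) - P = FvG.fc hΔ ((fun _ => 1) - pos) := by
    rw [hPdef, ← FvG.fc_one hΔ, FvG.fc_sub]
  have h1Ppsd : ((1 : Matrix ι ι ℂ) - P).PosSemidef := by
    rw [h1P]
    refine FvG.fc_posSemidef hΔ (fun t => ?_)
    by_cases h : 0 < t <;> simp [hposdef, h]
  have h1Pproj : ((1 : Matrix ι ι ℂ) - P) * (1 - P) = 1 - P := by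
    rw [mul_sub, mul_one, sub_mul, one_mul, hPproj, sub_self, sub_zero]
  -- a and b
  have hab : (P * ρ).trace.re - (P * σ).trace.re = ∑ i, pos (lam i) * lam i := by
    have h3 : P * (ρ - σ) = FvG.fc hΔ (pos * id) := by
      have h4 := FvG.fc_mul hΔ pos id
      rw [FvG.fc_id] at h4
      rw [hPdef]
      exact h4
    have h5 : (P * (ρ - σ)).trace.re = ∑ i, (pos * (id : ℝ → ℝ)) (lam i) := by
      rw [h3, FvG.fc_trace_re]
    rw [mul_sub, Matrix.trace_sub, Complex.sub_re] at h5
    exact h5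
  have key_d : (P * ρ).trace.re - (P * σ).trace.re = (1 / 2) * ∑ i, |lam i| := by
    rw [hab]
    have hpt : ∀ i, pos (lam i) * lam i = (|lam i| + lam i) / 2 := by
      intro i
      by_cases h : 0 < lam i
      · rw [hposdef]
        simp only [if_pos h, one_mul]
        rw [abs_of_pos h]
        ring
      · rw [hposdef]
        simp only [if_neg h, zero_mul]
        push_neg at h
        rw [abs_of_nonpos h]
        ring
    rw [Finset.sum_congr rfl (fun i _ => hpt i)]
    rw [show (∑ i, (|lam i| + lam i) / 2) = ((∑ i, |lam i|) + ∑ i, lam i) / 2 by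
      rw [← Finset.sum_add_distrib, Finset.sum_div]]
    rw [sum_lam, add_zero]
    ring
  -- bounds on a and b
  have retr : ∀ {M : Matrix ι ι ℂ}, M.PosSemidef → ∀ {N : Matrix ι ι ℂ}, N.PosSemidef →
      0 ≤ (M * N).trace.re := by
    intro M hM N hN
    have := FvG.trace_mul_nonneg' hM hN
    rw [Complex.le_def] at this
    simpa using this.1
  have ha0 : 0 ≤ (P * ρ).trace.re := retr hPpsd hρp
  have hb0 : 0 ≤ (P * σ).trace.re := retr hPpsd hσp
  have hauxρ : ((1 - P) * ρ).trace.re = 1 - (P * ρ).trace.re := by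
    rw [sub_mul, one_mul, Matrix.trace_sub, Complex.sub_re, hρt]
    simp
  have hauxσ : ((1 - P) * σ).trace.re = 1 - (P * σ).trace.re := by
    rw [sub_mul, one_mul, Matrix.trace_sub, Complex.sub_re, hσt]
    simp
  have ha1 : (P * ρ).trace.re ≤ 1 := by
    have := retr h1Ppsd hρp
    rw [hauxρ] at this
    linarith
  have hb1 : (P * σ).trace.re ≤ 1 := by
    have := retr h1Ppsd hσp
    rw [hauxσ] at this
    linarith
  -- fidelity setup
  have hrp := FvG.msqrt_posSemidef hρp
  have hmp := FvG.msqrt_posSemidef hσp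
  have hAH : (msqrt σ * msqrt ρ)ᴴ = msqrt ρ * msqrt σ := by
    rw [conjTranspose_mul, hrp.isHermitian.eq, hmp.isHermitian.eq]
  have hAAH : (msqrt σ * msqrt ρ)ᴴ * (msqrt σ * msqrt ρ) = msqrt ρ * σ * msqrt ρ := by
    rw [hAH, mul_assoc, ← mul_assoc (msqrt σ), FvG.msqrt_mul_self hσp, ← mul_assoc]
  have hH : ((msqrt σ * msqrt ρ)ᴴ * (msqrt σ * msqrt ρ)).PosSemidef :=
    Matrix.posSemidef_conjTranspose_mul_self _
  have hHh := hH.1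
  have hsqH : FvG.fc hHh Real.sqrt ^ 2 = msqrt ρ * σ * msqrt ρ := by
    rw [pow_two, FvG.fc_mul]
    have h' : FvG.fc hHh (Real.sqrt * Real.sqrt) = FvG.fc hHh id :=
      FvG.fc_congr hHh (fun i => Real.mul_self_sqrt (hH.eigenvalues_nonneg i))
    rw [h', FvG.fc_id, hAAH]
  have hmsH : msqrt (msqrt ρ * σ * msqrt ρ) = FvG.fc hHh Real.sqrt := by
    refine FvG.msqrt_eq ?_ (FvG.fc_posSemidef hHh Real.sqrt_nonneg) hsqH
    rw [← hAAH]
    exact hH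
  set g : ℝ → ℝ := fun t => if 0 < t then (Real.sqrt t)⁻¹ else 0 with hgdef
  set W : Matrix ι ι ℂ := FvG.fc hHh g * (msqrt σ * msqrt ρ)ᴴ with hWdef
  have hgid : ∀ i, (g * (id : ℝ → ℝ)) (hHh.eigenvalues i) = Real.sqrt (hHh.eigenvalues i) := by
    intro i
    have hnn := hH.eigenvalues_nonneg i
    by_cases h : 0 < hHh.eigenvalues i
    · have hs : Real.sqrt (hHh.eigenvalues i) ≠ 0 := (Real.sqrt_pos.mpr h).ne'
      simp only [Pi.mul_apply, hgdef, if_pos h, id_eq]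
      rw [inv_mul_eq_div, div_eq_iff hs]
      exact (Real.mul_self_sqrt hnn).symm
    · have h0 : hHh.eigenvalues i = 0 := le_antisymm (not_lt.mp h) hnn
      rw [Pi.mul_apply, id_eq, h0]
      simp [hgdef]
  have hWA : W * (msqrt σ * msqrt ρ) = FvG.fc hHh Real.sqrt := by
    rw [hWdef, mul_assoc]
    have h4 := FvG.fc_mul hHh g id
    rw [FvG.fc_id] at h4
    rw [h4]
    exact FvG.fc_congr hHh hgid
  have hfcgh : (FvG.fc hHh g)ᴴ = FvG.fc hHh g := (FvG.fc_hermitian hHh g).eq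
  have hWH : Wᴴ = (msqrt σ * msqrt ρ) * FvG.fc hHh g := by
    rw [hWdef, conjTranspose_mul, hfcgh, conjTranspose_conjTranspose]
  have hWWH : W * Wᴴ = FvG.fc hHh pos := by
    rw [hWH, ← mul_assoc, hWA, FvG.fc_mul]
    refine FvG.fc_congr hHh (fun i => ?_)
    have hnn := hH.eigenvalues_nonneg i
    by_cases h : 0 < hHh.eigenvalues i
    · simp only [Pi.mul_apply, hgdef, hposdef, if_pos h]
      exact mul_inv_cancel₀ (Real.sqrt_pos.mpr h).ne'
    · have h0 : hHh.eigenvalues i = 0 := le_antisymm (not_lt.mp h) hnn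
      rw [Pi.mul_apply, h0]
      simp [hgdef, hposdef]
  have hcontr : (1 - Wᴴ * W).PosSemidef := by
    apply FvG.contraction_flip
    have : (1 : Matrix ι ι ℂ) - W * Wᴴ = FvG.fc hHh ((fun _ => 1) - pos) := by
      rw [hWWH, ← FvG.fc_one hHh, FvG.fc_sub]
    rw [this]
    refine FvG.fc_posSemidef hHh (fun t => ?_)
    by_cases h : 0 < t <;> simp [hposdef, h]
  -- decompose the fidelity
  have hfidW : fidelity ρ σ = (W * (msqrt σ * msqrt ρ)).trace.re := by
    unfold fidelity
    rw [hmsH, ← hWA]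
  have hsplit : msqrt σ * msqrt ρ = msqrt σ * (P * msqrt ρ) + msqrt σ * ((1 - P) * msqrt ρ) := by
    rw [← mul_add, ← add_mul]
    simp
  have hdecomp : fidelity ρ σ =
      (W * (msqrt σ * (P * msqrt ρ))).trace.re +
      (W * (msqrt σ * ((1 - P) * msqrt ρ))).trace.re := by
    rw [hfidW, hsplit, mul_add, Matrix.trace_add, Complex.add_re]
  have s1 := FvG.step hρp hσp hPpsd hPproj hcontr
  have s2 := FvG.step hρp hσp h1Ppsd h1Pproj hcontr
  have hFle : fidelity ρ σ ≤
      Real.sqrt ((P * ρ).trace.re) * Real.sqrt ((P * σ).trace.re) +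
      Real.sqrt (1 - (P * ρ).trace.re) * Real.sqrt (1 - (P * σ).trace.re) := by
    rw [hdecomp, ← hauxρ, ← hauxσ]
    exact add_le_add s1 s2
  have hF0 : 0 ≤ fidelity ρ σ := by
    unfold fidelity
    refine FvG.trace_re_nonneg' (FvG.msqrt_posSemidef ?_)
    have := hσp.mul_mul_conjTranspose_same (msqrt ρ)
    rwa [hrp.isHermitian.eq] at this
  have hd : 0 ≤ (P * ρ).trace.re - (P * σ).trace.re := by
    rw [key_d]
    have : 0 ≤ ∑ i, |lam i| := Finset.sum_nonneg fun i _ => abs_nonneg _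
    linarith
  have final := FvG.final_arith ha0 ha1 hb0 hb1 hd hF0 hFle
  calc traceDist ρ σ = (P * ρ).trace.re - (P * σ).trace.re := by rw [dval, ← key_d]
    _ ≤ Real.sqrt (1 - fidelity ρ σ ^ 2) := final
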